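/- arXiv:1606.08073 — 4 statements merged into one kernel-verified Lean document; each statement's English description precedes it below -/
import Mathlib

section
/- Let G be a simple graph on a vertex set V in which every vertex has degree at most D, and let v ∈ V. Then the collection of maximal cliques of G that contain v is finite and has cardinality at most the binomial coefficient C(D+1, ⌊(D+1)/2⌋). -/
/-!
Every clique through `v` lies in the closed neighbourhood `N = {v} ∪ N(v)`, which has at most
`D + 1` elements, and maximal cliques are pairwise incomparable. So the maximal cliques through
`v` form an antichain of subsets of `N`, and Sperner's theorem bounds its size by
`C(|N|, ⌊|N|/2⌋) ≤ C(D + 1, ⌊(D + 1)/2⌋)`.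
-/

open Finset

theorem IsAntichain.ncard_le_choose_of_forall_subset {α : Type*} {𝒜 : Set (Set α)}
    (h𝒜 : IsAntichain (· ⊆ ·) 𝒜) (N : Finset α) (hN : ∀ s ∈ 𝒜, s ⊆ N) :
    𝒜.ncard ≤ (#N).choose (#N / 2) := by
  classical
  let φ : Finset N ↪o Set α := (mapEmbedding (Function.Embedding.subtype _)).trans coeEmb
  have hφ : 𝒜 ⊆ Set.range φ := by
    intro s hs
    have hfin : s.Finite := N.finite_toSet.subset (hN s hs)
    refine ⟨hfin.toFinset.subtype (· ∈ N), ?_⟩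
    simpa [φ] using fun x hx => hN s hs hx
  have hanti : IsAntichain (· ⊆ ·) (SetLike.coe (φ ⁻¹' 𝒜).toFinset) := by
    simpa using h𝒜.preimage_embedding φ
  calc 𝒜.ncard = (φ ⁻¹' 𝒜).ncard :=
        (Set.ncard_preimage_of_injective_subset_range φ.injective hφ).symm
    _ = #(φ ⁻¹' 𝒜).toFinset := Set.ncard_eq_toFinset_card' _
    _ ≤ (#N).choose (#N / 2) := by simpa using hanti.sperner

namespace SimpleGraph

variable {V : Type*}

theorem IsClique.subset_insert_neighborSet {G : SimpleGraph V} {s : Set V} {v : V}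
    (hs : G.IsClique s) (hv : v ∈ s) :
    s ⊆ Insert.insert v (G.neighborSet v) := by
  intro u hu
  rcases eq_or_ne u v with rfl | hne
  · exact Set.mem_insert u _
  · exact Set.mem_insert_of_mem v (hs hv hu hne.symm)

theorem card_insert_neighborFinset_le (G : SimpleGraph V) [DecidableEq V] (v : V)
    [Fintype (G.neighborSet v)] :
    #(insert v (G.neighborFinset v)) ≤ G.degree v + 1 :=
  (card_insert_le _ _).trans_eq (by rw [card_neighborFinset_eq_degree])

end SimpleGraph

/-- In a simple graph all of whose vertex degrees are bounded by `D`, the family of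
maximal cliques containing a fixed vertex `v` is finite, of cardinality at most the
binomial coefficient `C(D+1, ⌊(D+1)/2⌋)` (Sperner bound). -/
theorem maxCliques_through_vertex_finite_card_le
    {V : Type*} (G : SimpleGraph V) [G.LocallyFinite] (D : ℕ)
    (hdeg : ∀ v : V, G.degree v ≤ D) (v : V) :
    {s : Set V | Maximal G.IsClique s ∧ v ∈ s}.Finite ∧
    {s : Set V | Maximal G.IsClique s ∧ v ∈ s}.ncard ≤ (D + 1).choose ((D + 1) / 2) := by
  classical
  set N := insert v (G.neighborFinset v)
  have hsub : ∀ s ∈ {s : Set V | Maximal G.IsClique s ∧ v ∈ s}, s ⊆ N := fun s hs => by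
    simpa [N] using hs.1.prop.subset_insert_neighborSet hs.2
  have hanti : IsAntichain (· ⊆ ·) {s : Set V | Maximal G.IsClique s ∧ v ∈ s} :=
    (setOfPred_maximal_antichain G.IsClique).subset fun _ hs => hs.1
  have hN : #N ≤ D + 1 :=
    (G.card_insert_neighborFinset_le v).trans (Nat.add_le_add_right (hdeg v) 1)
  refine ⟨N.finite_toSet.finite_subsets.subset hsub, ?_⟩
  calc _ ≤ (#N).choose (#N / 2) := hanti.ncard_le_choose_of_forall_subset N hsub
    _ ≤ (D + 1).choose (#N / 2) := Nat.choose_le_choose _ hN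
    _ ≤ (D + 1).choose ((D + 1) / 2) := Nat.choose_le_middle _ _
end

section
/- Let G be a simple graph in which every vertex has degree at most D, and let C(G) be its clique graph, whose vertices are the maximal cliques of G, two distinct maximal cliques being adjacent iff their intersection is nonempty. Then every vertex of C(G) has degree at most (D+1)·(Sper − 1), where Sper = C(D+1, ⌊(D+1)/2⌋) is the binomial coefficient bounding the number of maximal cliques through a single vertex. -/
/-- The clique graph of a simple graph `G`: its vertices are the maximal cliques of
`G`, two distinct maximal cliques being adjacent iff they intersect. -/
def cliqueGraph {V : Type*} (G : SimpleGraph V) :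
    SimpleGraph {s : Set V // Maximal G.IsClique s} where
  Adj A B := A ≠ B ∧ (A.1 ∩ B.1).Nonempty
  symm := by
    constructor
    rintro A B ⟨hne, hint⟩
    exact ⟨hne.symm, by rwa [Set.inter_comm]⟩
  loopless := by
    constructor
    rintro A ⟨hne, -⟩
    exact hne rfl

/-!
A clique through `v` lies in the closed neighbourhood `N[v]`, which has `deg v + 1 ≤ D + 1`
elements. The maximal cliques through `v` are pairwise incomparable subsets of `N[v]`, so by
Sperner's theorem there are at most `C(D+1, ⌊(D+1)/2⌋)` of them. A maximal clique `A` meets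
each of its neighbours in `C(G)` at one of its at most `D + 1` vertices, and each vertex of `A`
lies in at most `C(D+1, ⌊(D+1)/2⌋) - 1` maximal cliques other than `A`.
-/

theorem Nat.choose_half_le_choose_half {m n : ℕ} (h : m ≤ n) :
    m.choose (m / 2) ≤ n.choose (n / 2) :=
  (Nat.choose_le_choose _ h).trans (Nat.choose_le_middle _ _)

theorem Set.Finite.ncard_biUnion_le_ncard_mul {ι α : Type*} {t : Set ι} (ht : t.Finite)
    {f : ι → Set α} {c : ℕ} (hf : ∀ i ∈ t, (f i).ncard ≤ c) :
    (⋃ i ∈ t, f i).ncard ≤ t.ncard * c := by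
  classical
  calc (⋃ i ∈ t, f i).ncard ≤ ∑ i ∈ ht.toFinset, (f i).ncard := by
        simpa using ht.toFinset.set_ncard_biUnion_le f
    _ ≤ ht.toFinset.card * c :=
        Finset.sum_le_card_nsmul _ _ _ fun i hi => hf i (ht.mem_toFinset.1 hi)
    _ = t.ncard * c := by rw [Set.ncard_eq_toFinset_card _ ht]

theorem IsAntichain.ncard_le_choose_of_subset {α : Type*} {K : Set α} (hK : K.Finite)
    {𝒜 : Set (Set α)} (h𝒜 : IsAntichain (· ⊆ ·) 𝒜) (h𝒜K : ∀ s ∈ 𝒜, s ⊆ K) :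
    𝒜.ncard ≤ K.ncard.choose (K.ncard / 2) := by
  classical
  have := hK.fintype
  let trace : Set α → Finset K := fun s => {x | (x : α) ∈ s}
  have trace_subset {s t : Set α} (hs : s ⊆ K) (hst : trace s ⊆ trace t) : s ⊆ t := fun x hx =>
    (Finset.mem_filter.1 (hst (Finset.mem_filter.2 ⟨Finset.mem_univ ⟨x, hs hx⟩, hx⟩))).2
  have hinj : Set.InjOn trace 𝒜 := fun s hs t ht hst =>
    (trace_subset (h𝒜K s hs) hst.le).antisymm (trace_subset (h𝒜K t ht) hst.ge)
  have hanti : IsAntichain (· ⊆ ·) (SetLike.coe (trace '' 𝒜).toFinset) := by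
    rw [Set.coe_toFinset]
    rintro _ ⟨s, hs, rfl⟩ _ ⟨t, ht, rfl⟩ hne hst
    exact h𝒜 hs ht (ne_of_apply_ne trace hne) (trace_subset (h𝒜K s hs) hst)
  calc 𝒜.ncard = (trace '' 𝒜).toFinset.card := by
        rw [← Set.ncard_eq_toFinset_card', hinj.ncard_image]
    _ ≤ (Fintype.card K).choose (Fintype.card K / 2) := hanti.sperner
    _ = K.ncard.choose (K.ncard / 2) := by rw [← Nat.card_eq_fintype_card, Nat.card_coe_set_eq]

namespace SimpleGraph

variable {V : Type*} {G : SimpleGraph V}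

variable (G) in
def closedNeighborSet (v : V) : Set V := insert v (G.neighborSet v)

theorem IsClique.subset_closedNeighborSet {s : Set V} (hs : G.IsClique s) {v : V} (hv : v ∈ s) :
    s ⊆ G.closedNeighborSet v := by
  intro w hw
  rcases eq_or_ne v w with rfl | hne
  · exact Set.mem_insert _ _
  · exact Set.mem_insert_of_mem _ (hs hv hw hne)

section LocallyFinite

variable [G.LocallyFinite]

variable (G) in
theorem finite_closedNeighborSet (v : V) : (G.closedNeighborSet v).Finite :=
  (G.neighborSet v).toFinite.insert v

variable (G) in
theorem ncard_closedNeighborSet (v : V) :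
    (G.closedNeighborSet v).ncard = G.degree v + 1 := by
  rw [closedNeighborSet, Set.ncard_insert_of_notMem G.notMem_neighborSet_self,
    ← Nat.card_coe_set_eq, Nat.card_eq_fintype_card, card_neighborSet_eq_degree]

theorem IsClique.finite {s : Set V} (hs : G.IsClique s) : s.Finite := by
  rcases s.eq_empty_or_nonempty with rfl | ⟨v, hv⟩
  · exact Set.finite_empty
  · exact (finite_closedNeighborSet G v).subset (hs.subset_closedNeighborSet hv)

theorem IsClique.ncard_le_of_degree_le {D : ℕ} (hdeg : ∀ v, G.degree v ≤ D) {s : Set V}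
    (hs : G.IsClique s) : s.ncard ≤ D + 1 := by
  rcases s.eq_empty_or_nonempty with rfl | ⟨v, hv⟩
  · simp
  · calc s.ncard ≤ (G.closedNeighborSet v).ncard :=
          Set.ncard_le_ncard (hs.subset_closedNeighborSet hv) (finite_closedNeighborSet G v)
      _ = G.degree v + 1 := ncard_closedNeighborSet G v
      _ ≤ D + 1 := Nat.succ_le_succ (hdeg v)

theorem finite_setOf_maximal_isClique_mem (v : V) :
    {B : {s : Set V // Maximal G.IsClique s} | v ∈ B.1}.Finite := by
  refine Set.Finite.of_finite_image ?_ Subtype.val_injective.injOn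
  refine (finite_closedNeighborSet G v).finite_subsets.subset ?_
  rintro _ ⟨B, hB, rfl⟩
  exact B.2.1.subset_closedNeighborSet hB

theorem ncard_setOf_maximal_isClique_mem_le (v : V) :
    {B : {s : Set V // Maximal G.IsClique s} | v ∈ B.1}.ncard ≤
      (G.degree v + 1).choose ((G.degree v + 1) / 2) := by
  rw [← Set.ncard_image_of_injective _ Subtype.val_injective, ← ncard_closedNeighborSet]
  refine IsAntichain.ncard_le_choose_of_subset (finite_closedNeighborSet G v) ?_ ?_
  · rintro _ ⟨B, -, rfl⟩ _ ⟨C, -, rfl⟩ hne hBC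
    exact hne (B.2.eq_of_subset C.2.1 hBC)
  · rintro _ ⟨B, hB, rfl⟩
    exact B.2.1.subset_closedNeighborSet hB

end LocallyFinite

end SimpleGraph

theorem cliqueGraph_neighborSet_subset_biUnion {V : Type*} {G : SimpleGraph V}
    (A : {s : Set V // Maximal G.IsClique s}) :
    (cliqueGraph G).neighborSet A ⊆ ⋃ v ∈ A.1, {B | v ∈ B.1} \ {A} := by
  rintro B ⟨hne, v, hvA, hvB⟩
  exact Set.mem_biUnion hvA ⟨hvB, hne.symm⟩

/-- If every vertex of `G` has degree at most `D`, then every vertex of the clique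
graph `C(G)` has degree at most `(D+1) * (Sper - 1)`, where
`Sper = C(D+1, ⌊(D+1)/2⌋)` is the Sperner bound on the number of maximal cliques
through a single vertex. -/
theorem cliqueGraph_degree_le
    {V : Type*} (G : SimpleGraph V) [G.LocallyFinite] (D : ℕ)
    (hdeg : ∀ v : V, G.degree v ≤ D)
    (A : {s : Set V // Maximal G.IsClique s}) :
    ((cliqueGraph G).neighborSet A).Finite ∧
    ((cliqueGraph G).neighborSet A).ncard ≤ (D + 1) * ((D + 1).choose ((D + 1) / 2) - 1) := by
  set Sper := (D + 1).choose ((D + 1) / 2)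
  have hA : A.1.Finite := A.2.1.finite
  have hsub := cliqueGraph_neighborSet_subset_biUnion A
  have hfin : (⋃ v ∈ A.1, {B | v ∈ B.1} \ {A}).Finite :=
    hA.biUnion fun v _ => (SimpleGraph.finite_setOf_maximal_isClique_mem v).sdiff
  have hthrough (v : V) (hv : v ∈ A.1) : ({B | v ∈ B.1} \ {A}).ncard ≤ Sper - 1 := by
    have hAv : A ∈ {B : {s : Set V // Maximal G.IsClique s} | v ∈ B.1} := hv
    rw [Set.ncard_sdiff_singleton_of_mem hAv]
    exact Nat.sub_le_sub_right ((SimpleGraph.ncard_setOf_maximal_isClique_mem_le v).trans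
      (Nat.choose_half_le_choose_half (Nat.succ_le_succ (hdeg v)))) 1
  refine ⟨hfin.subset hsub, ?_⟩
  calc ((cliqueGraph G).neighborSet A).ncard
      ≤ (⋃ v ∈ A.1, {B | v ∈ B.1} \ {A}).ncard := Set.ncard_le_ncard hsub hfin
    _ ≤ A.1.ncard * (Sper - 1) := hA.ncard_biUnion_le_ncard_mul hthrough
    _ ≤ (D + 1) * (Sper - 1) := Nat.mul_le_mul_right _ (A.2.1.ncard_le_of_degree_le hdeg)
end

section
/- Let G be a connected simple graph in which every vertex has degree at most D, and let C(G) be its clique graph (vertices: the maximal cliques of G; adjacency: distinct maximal cliques with nonempty intersection). Let f assign to every vertex v of G some maximal clique f(v) containing v. Then C(G) is connected, every maximal clique of G is at clique-graph distance at most 1 from the image of f, and for all vertices v, v' of G one has d_G(v, v') − 1 ≤ d_{C(G)}(f(v), f(v')) ≤ d_G(v, v') + 1. In particular G and C(G) are 1-roughly isometric. -/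
/-!
An edge path `v = v₀, v₁, …, vₙ = v'` in `G` gives the chain of maximal cliques
`f v, C₁, …, Cₙ, f v'` with `Cᵢ ⊇ {vᵢ₋₁, vᵢ}`, consecutive members sharing a vertex, so
`d_{C(G)}(f v, f v') ≤ n + 1`. Conversely a path `f v = A₀, …, Aₙ = f v'` in `C(G)`
gives the vertices `v, w₁, …, wₙ, v'` with `wᵢ ∈ Aᵢ₋₁ ∩ Aᵢ`, consecutive members lying in
a common clique, so `d_G(v, v') ≤ n + 1`. Every clique extends to a maximal one because
cliques are exactly the chains of the adjacency relation, so the Hausdorff maximality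
principle applies.
-/

namespace SimpleGraph

variable {V : Type*} {G : SimpleGraph V} {s : Set V}

theorem maximal_isClique_iff_isMaxChain : Maximal G.IsClique s ↔ IsMaxChain G.Adj s := by
  simp only [Maximal, IsMaxChain, isClique_iff_isChain_adj]
  refine and_congr_right fun _ => forall₂_congr fun t _ => ?_
  exact ⟨fun h hst => (h hst).antisymm' hst, fun h hst => (h hst).ge⟩

theorem IsClique.exists_maximal_superset (hs : G.IsClique s) :
    ∃ t, s ⊆ t ∧ Maximal G.IsClique t := by
  obtain ⟨t, ht, hst⟩ := (G.isClique_iff_isChain_adj.mp hs).exists_maxChain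
  exact ⟨t, hst, maximal_isClique_iff_isMaxChain.mpr ht⟩

theorem nonempty_of_maximal_isClique [Nonempty V] (hs : Maximal G.IsClique s) :
    s.Nonempty :=
  (maximal_isClique_iff_isMaxChain.mp hs).nonempty_iff.mp ‹_›

theorem IsClique.exists_walk_length_le_one (hs : G.IsClique s) {v w : V} (hv : v ∈ s)
    (hw : w ∈ s) : ∃ p : G.Walk v w, p.length ≤ 1 := by
  obtain rfl | hvw := eq_or_ne v w
  · exact ⟨.nil, zero_le_one⟩
  · exact ⟨(hs hv hw hvw).toWalk, (hs hv hw hvw).length_toWalk.le⟩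

theorem isClique_cliqueGraph_setOf_mem (v : V) : (cliqueGraph G).IsClique {A | v ∈ A.1} :=
  fun _ hA _ hB hAB => ⟨hAB, v, hA, hB⟩

theorem exists_cliqueGraph_walk_length_le_one_of_mem {v : V}
    {A B : {s : Set V // Maximal G.IsClique s}} (hA : v ∈ A.1) (hB : v ∈ B.1) :
    ∃ q : (cliqueGraph G).Walk A B, q.length ≤ 1 :=
  (isClique_cliqueGraph_setOf_mem v).exists_walk_length_le_one hA hB

theorem Walk.exists_cliqueGraph_walk_length_le {v v' : V} (p : G.Walk v v')
    {A B : {s : Set V // Maximal G.IsClique s}} (hv : v ∈ A.1) (hv' : v' ∈ B.1) :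
    ∃ q : (cliqueGraph G).Walk A B, q.length ≤ p.length + 1 := by
  induction p generalizing A with
  | nil => exact exists_cliqueGraph_walk_length_le_one_of_mem hv hv'
  | @cons u w _ huw p ih =>
    obtain ⟨C, hsub, hC⟩ := (isClique_pair.mpr fun _ => huw).exists_maximal_superset
    obtain ⟨q₁, hq₁⟩ := exists_cliqueGraph_walk_length_le_one_of_mem (B := ⟨C, hC⟩) hv
      (hsub (Set.mem_insert u {w}))
    obtain ⟨q₂, hq₂⟩ := ih (A := ⟨C, hC⟩) (hsub (Set.mem_insert_of_mem u rfl)) hv'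
    exact ⟨q₁.append q₂, by simp only [Walk.length_append, Walk.length_cons]; omega⟩

theorem Walk.exists_walk_length_le_of_cliqueGraph_walk
    {A B : {s : Set V // Maximal G.IsClique s}} (q : (cliqueGraph G).Walk A B) {v v' : V}
    (hv : v ∈ A.1) (hv' : v' ∈ B.1) : ∃ p : G.Walk v v', p.length ≤ q.length + 1 := by
  induction q generalizing v with
  | @nil A => exact A.2.1.exists_walk_length_le_one hv hv'
  | @cons A C _ hAC q ih =>
    obtain ⟨w, hwA, hwC⟩ := hAC.2
    obtain ⟨p₁, hp₁⟩ := A.2.1.exists_walk_length_le_one hv hwA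
    obtain ⟨p₂, hp₂⟩ := ih hwC hv'
    exact ⟨p₁.append p₂, by simp only [Walk.length_append, Walk.length_cons]; omega⟩

theorem Connected.cliqueGraph (h : G.Connected) : (cliqueGraph G).Connected := by
  have := h.nonempty
  obtain ⟨A, -, hA⟩ := (isClique_empty (G := G)).exists_maximal_superset
  have : Nonempty {s : Set V // Maximal G.IsClique s} := ⟨⟨A, hA⟩⟩
  refine ⟨fun A B => ?_⟩
  obtain ⟨v, hv⟩ := nonempty_of_maximal_isClique A.2
  obtain ⟨v', hv'⟩ := nonempty_of_maximal_isClique B.2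
  obtain ⟨q, -⟩ := (h v v').some.exists_cliqueGraph_walk_length_le hv hv'
  exact ⟨q⟩

theorem dist_cliqueGraph_le_one_of_mem {v : V} {A B : {s : Set V // Maximal G.IsClique s}}
    (hA : v ∈ A.1) (hB : v ∈ B.1) : (cliqueGraph G).dist A B ≤ 1 := by
  obtain ⟨q, hq⟩ := exists_cliqueGraph_walk_length_le_one_of_mem hA hB
  exact (dist_le q).trans hq

theorem dist_cliqueGraph_le_dist_add_one {v v' : V} {A B : {s : Set V // Maximal G.IsClique s}}
    (h : G.Reachable v v') (hv : v ∈ A.1) (hv' : v' ∈ B.1) :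
    (cliqueGraph G).dist A B ≤ G.dist v v' + 1 := by
  obtain ⟨p, hp⟩ := h.exists_walk_length_eq_dist
  obtain ⟨q, hq⟩ := p.exists_cliqueGraph_walk_length_le hv hv'
  exact (dist_le q).trans (hp ▸ hq)

theorem dist_le_dist_cliqueGraph_add_one {v v' : V} {A B : {s : Set V // Maximal G.IsClique s}}
    (h : (cliqueGraph G).Reachable A B) (hv : v ∈ A.1) (hv' : v' ∈ B.1) :
    G.dist v v' ≤ (cliqueGraph G).dist A B + 1 := by
  obtain ⟨q, hq⟩ := h.exists_walk_length_eq_dist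
  obtain ⟨p, hp⟩ := q.exists_walk_length_le_of_cliqueGraph_walk hv hv'
  exact (dist_le p).trans (hq ▸ hp)

end SimpleGraph

theorem cliqueGraph_roughIsometry_general
    {V : Type*} (G : SimpleGraph V) (hconn : G.Connected)
    (f : V → {s : Set V // Maximal G.IsClique s}) (hf : ∀ v : V, v ∈ (f v).1) :
    (cliqueGraph G).Connected ∧
    (∀ A : {s : Set V // Maximal G.IsClique s}, ∃ v : V, (cliqueGraph G).dist A (f v) ≤ 1) ∧
    (∀ v v' : V,
      (G.dist v v' : ℤ) - 1 ≤ ((cliqueGraph G).dist (f v) (f v') : ℤ) ∧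
      ((cliqueGraph G).dist (f v) (f v') : ℤ) ≤ (G.dist v v' : ℤ) + 1) := by
  have := hconn.nonempty
  refine ⟨hconn.cliqueGraph, fun A => ?_, fun v v' => ⟨?_, ?_⟩⟩
  · obtain ⟨v, hv⟩ := SimpleGraph.nonempty_of_maximal_isClique A.2
    exact ⟨v, SimpleGraph.dist_cliqueGraph_le_one_of_mem hv (hf v)⟩
  · have := SimpleGraph.dist_le_dist_cliqueGraph_add_one
      (hconn.cliqueGraph.preconnected (f v) (f v')) (hf v) (hf v')
    omega
  · have := SimpleGraph.dist_cliqueGraph_le_dist_add_one (hconn v v') (hf v) (hf v')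
    omega

/-- For a connected simple graph `G` of degree bounded by `D`, choosing for every
vertex `v` a maximal clique `f v` containing `v` yields a `1`-rough isometry between
`G` and its clique graph: `C(G)` is connected, every maximal clique is at
clique-graph distance at most `1` from the image of `f`, and
`d_G(v,v') - 1 ≤ d_{C(G)}(f v, f v') ≤ d_G(v,v') + 1` for all vertices `v, v'`. -/
theorem cliqueGraph_roughIsometry
    {V : Type*} (G : SimpleGraph V) [G.LocallyFinite] (D : ℕ)
    (hdeg : ∀ v : V, G.degree v ≤ D) (hconn : G.Connected)
    (f : V → {s : Set V // Maximal G.IsClique s}) (hf : ∀ v : V, v ∈ (f v).1) :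
    (cliqueGraph G).Connected ∧
    (∀ A : {s : Set V // Maximal G.IsClique s}, ∃ v : V, (cliqueGraph G).dist A (f v) ≤ 1) ∧
    (∀ v v' : V,
      (G.dist v v' : ℤ) - 1 ≤ ((cliqueGraph G).dist (f v) (f v') : ℤ) ∧
      ((cliqueGraph G).dist (f v) (f v') : ℤ) ≤ (G.dist v v' : ℤ) + 1) :=
  cliqueGraph_roughIsometry_general G hconn f hf
end

section
/- Let G₁ and G₂ be connected simple graphs with globally bounded vertex degree, and suppose G₁ has uniform polynomial growth of exponent α: there exist constants A, B > 0 and r₀ such that A·r^α ≤ β(G₁, v, r) ≤ B·r^α for all vertices v and all r ≥ r₀. If there is a (λ, ε)-quasi-isometry f : V(G₁) → V(G₂) (with image C-dense in G₂), then G₂ also has uniform polynomial growth of the same exponent α: there exist A', B' > 0 and r₀' with A'·r^α ≤ β(G₂, w, r) ≤ B'·r^α for all vertices w of G₂ and all r ≥ r₀'. -/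
/-!
In a connected graph of degree at most `D`, a ball of radius `r` has at most `(D + 1) ^ r`
vertices; so the fibres of `f` (of diameter at most `λε`) and the `C`-balls of `G₂` have
uniformly bounded size. Fix `w` and `x` with `d(w, f x) ≤ C`, and `N = ⌈λ(1 + 2C + ε)⌉`.
Then `f` maps the `s`-ball around `x` into the `N s`-ball around `w`, and the `r`-ball around
`w` is covered by the `C`-balls around the images of the `N r`-ball around `x`. Hence
`β₂(w, r)` lies between constant multiples of `β₁(x, ⌊r / N⌋)` and `β₁(x, N r)`, and the bounds
`A r^α ≤ β₁ ≤ B r^α` transfer to `G₂`, with `α ≥ 0` because `β₁ ≥ 1`.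
-/

noncomputable def graphGrowth {V : Type*} (G : SimpleGraph V) (v : V) (r : ℕ) : ℕ :=
  {w : V | G.dist v w ≤ r}.ncard

lemma Set.ncard_le_mul_ncard_of_subset_biUnion {α ι : Type*} {s : Set α} {t : Set ι}
    {F : ι → Set α} {K : ℕ} (ht : t.Finite) (hF : ∀ i ∈ t, (F i).Finite)
    (hK : ∀ i ∈ t, (F i).ncard ≤ K) (hs : s ⊆ ⋃ i ∈ t, F i) : s.ncard ≤ K * t.ncard := by
  have hs' : s ⊆ ⋃ i ∈ ht.toFinset, F i := by simpa using hs
  calc s.ncard ≤ (⋃ i ∈ ht.toFinset, F i).ncard :=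
        Set.ncard_le_ncard hs' <|
          ht.toFinset.finite_toSet.biUnion fun i hi => hF i (by simpa using hi)
    _ ≤ ∑ i ∈ ht.toFinset, (F i).ncard := ht.toFinset.set_ncard_biUnion_le F
    _ ≤ ht.toFinset.card • K := Finset.sum_le_card_nsmul _ _ _ fun i hi => hK i (by simpa using hi)
    _ = K * t.ncard := by rw [smul_eq_mul, Set.ncard_eq_toFinset_card _ ht, mul_comm]

namespace SimpleGraph

variable {V : Type*} {G : SimpleGraph V}

lemma exists_adj_dist_add_one_le {v w : V} (h : G.dist v w ≠ 0) :
    ∃ u, G.Adj u w ∧ G.dist v u + 1 ≤ G.dist v w := by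
  rw [dist_comm] at h ⊢
  obtain ⟨p, hp⟩ := exists_walk_of_dist_ne_zero h
  cases p with
  | nil => simp at hp h
  | @cons _ u _ hadj q =>
    refine ⟨u, hadj.symm, ?_⟩
    rw [dist_comm, ← hp, Walk.length_cons]
    exact Nat.add_le_add_right (dist_le q) 1

lemma setOf_dist_le_succ_subset (v : V) (r : ℕ) :
    {w | G.dist v w ≤ r + 1} ⊆ ⋃ u ∈ {w | G.dist v w ≤ r}, insert u (G.neighborSet u) := by
  intro w hw
  simp only [Set.mem_ofPred_eq, Set.mem_iUnion, Set.mem_insert_iff, mem_neighborSet] at hw ⊢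
  by_cases h : G.dist v w ≤ r
  · exact ⟨w, h, Or.inl rfl⟩
  · obtain ⟨u, hadj, hu⟩ := exists_adj_dist_add_one_le (G := G) (v := v) (w := w) (by omega)
    exact ⟨u, by omega, Or.inr hadj⟩

lemma Connected.setOf_dist_le_zero (hconn : G.Connected) (v : V) :
    {w | G.dist v w ≤ 0} = {v} := by
  ext w
  simp [hconn.dist_eq_zero_iff, eq_comm]

variable [G.LocallyFinite]

lemma Connected.finite_setOf_dist_le (hconn : G.Connected) (v : V) (r : ℕ) :
    {w | G.dist v w ≤ r}.Finite := by
  induction r with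
  | zero => rw [hconn.setOf_dist_le_zero]; exact Set.finite_singleton v
  | succ r ih =>
    exact (ih.biUnion fun u _ => (G.neighborSet u).toFinite.insert u).subset
      (setOf_dist_le_succ_subset v r)

lemma Connected.graphGrowth_le_pow (hconn : G.Connected) {D : ℕ} (hdeg : ∀ x, G.degree x ≤ D)
    (v : V) (r : ℕ) : graphGrowth G v r ≤ (D + 1) ^ r := by
  induction r with
  | zero => rw [graphGrowth, hconn.setOf_dist_le_zero, Set.ncard_singleton, pow_zero]
  | succ r ih =>
    have hnbhd (u : V) : (insert u (G.neighborSet u)).ncard ≤ D + 1 := by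
      refine (Set.ncard_insert_le _ _).trans (Nat.add_le_add_right ?_ 1)
      rw [Set.ncard_eq_toFinset_card']
      exact hdeg u
    calc graphGrowth G v (r + 1) ≤ (D + 1) * graphGrowth G v r :=
          Set.ncard_le_mul_ncard_of_subset_biUnion (hconn.finite_setOf_dist_le v r)
            (fun u _ => (G.neighborSet u).toFinite.insert u) (fun u _ => hnbhd u)
            (setOf_dist_le_succ_subset v r)
      _ ≤ (D + 1) ^ (r + 1) := by rw [pow_succ']; exact Nat.mul_le_mul_left _ ih

lemma Connected.one_le_graphGrowth (hconn : G.Connected) (v : V) (r : ℕ) :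
    1 ≤ graphGrowth G v r :=
  (Set.ncard_pos (hconn.finite_setOf_dist_le v r)).mpr ⟨v, by simp⟩

end SimpleGraph

lemma nonneg_of_one_le_mul_rpow {α B : ℝ} {r₀ : ℕ}
    (h : ∀ r : ℕ, r₀ ≤ r → 1 ≤ B * (r : ℝ) ^ α) : 0 ≤ α := by
  by_contra! hα
  have hlim : Filter.Tendsto (fun r : ℕ => B * (r : ℝ) ^ α) Filter.atTop (nhds 0) := by
    simpa using ((tendsto_rpow_neg_atTop (neg_pos.mpr hα)).comp
      tendsto_natCast_atTop_atTop).const_mul B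
  obtain ⟨r, hr, hr₀⟩ :=
    ((hlim.eventually_lt_const one_pos).and (Filter.eventually_ge_atTop r₀)).exists
  exact (h r hr₀).not_gt hr

section QuasiIsometry

variable {V₁ V₂ : Type*} {G₁ : SimpleGraph V₁} {G₂ : SimpleGraph V₂} {f : V₁ → V₂} {lam ε C : ℝ}

lemma dist_le_mul_dist_map_add (hlam : 0 < lam)
    (hlow : ∀ x x' : V₁, lam⁻¹ * (G₁.dist x x' : ℝ) - ε ≤ (G₂.dist (f x) (f x') : ℝ))
    (x x' : V₁) : (G₁.dist x x' : ℝ) ≤ lam * (G₂.dist (f x) (f x') + ε) := by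
  rw [← inv_mul_le_iff₀ hlam]
  linarith [hlow x x']

variable [G₁.LocallyFinite]

lemma finite_fiber_and_ncard_le (hconn₁ : G₁.Connected) {D₁ : ℕ}
    (hdeg₁ : ∀ x : V₁, G₁.degree x ≤ D₁) (hlam : 0 < lam)
    (hlow : ∀ x x' : V₁, lam⁻¹ * (G₁.dist x x' : ℝ) - ε ≤ (G₂.dist (f x) (f x') : ℝ)) (y : V₂) :
    {x | f x = y}.Finite ∧ {x | f x = y}.ncard ≤ (D₁ + 1) ^ ⌈lam * ε⌉₊ := by
  rcases Set.eq_empty_or_nonempty {x | f x = y} with hempty | ⟨x₀, rfl⟩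
  · simp [hempty]
  have hsub : {x | f x = f x₀} ⊆ {x | G₁.dist x₀ x ≤ ⌈lam * ε⌉₊} := by
    intro x hx
    have := dist_le_mul_dist_map_add hlam hlow x₀ x
    rw [Set.mem_ofPred_eq] at hx
    rw [Set.mem_ofPred_eq, ← Nat.cast_le (α := ℝ)]
    simp only [hx, SimpleGraph.dist_self, CharP.cast_eq_zero, zero_add] at this
    exact this.trans (Nat.le_ceil _)
  have hball := hconn₁.finite_setOf_dist_le x₀ ⌈lam * ε⌉₊
  exact ⟨hball.subset hsub,
    (Set.ncard_le_ncard hsub hball).trans (hconn₁.graphGrowth_le_pow hdeg₁ x₀ _)⟩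

variable [G₂.LocallyFinite]

lemma graphGrowth_domain_le_mul_graphGrowth_codomain (hconn₁ : G₁.Connected)
    (hconn₂ : G₂.Connected) {D₁ : ℕ} (hdeg₁ : ∀ x : V₁, G₁.degree x ≤ D₁) (hlam : 0 < lam)
    (hlow : ∀ x x' : V₁, lam⁻¹ * (G₁.dist x x' : ℝ) - ε ≤ (G₂.dist (f x) (f x') : ℝ))
    (hup : ∀ x x' : V₁, (G₂.dist (f x) (f x') : ℝ) ≤ lam * (G₁.dist x x' : ℝ) + ε)
    {w : V₂} {x : V₁} (hwx : (G₂.dist w (f x) : ℝ) ≤ C) {s r : ℕ}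
    (hsr : lam * s + ε + C ≤ r) :
    graphGrowth G₁ x s ≤ (D₁ + 1) ^ ⌈lam * ε⌉₊ * graphGrowth G₂ w r := by
  refine Set.ncard_le_mul_ncard_of_subset_biUnion (hconn₂.finite_setOf_dist_le w r)
    (fun y _ => (finite_fiber_and_ncard_le hconn₁ hdeg₁ hlam hlow y).1)
    (fun y _ => (finite_fiber_and_ncard_le hconn₁ hdeg₁ hlam hlow y).2) fun x' hx' => ?_
  rw [Set.mem_ofPred_eq, ← Nat.cast_le (α := ℝ)] at hx'
  refine Set.mem_biUnion (x := f x') ?_ rfl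
  rw [Set.mem_ofPred_eq, ← Nat.cast_le (α := ℝ)]
  have htri : (G₂.dist w (f x') : ℝ) ≤ G₂.dist w (f x) + G₂.dist (f x) (f x') := by
    exact_mod_cast hconn₂.dist_triangle
  have hup' := hup x x'
  have : lam * (G₁.dist x x' : ℝ) ≤ lam * s := mul_le_mul_of_nonneg_left hx' hlam.le
  linarith

lemma graphGrowth_codomain_le_mul_graphGrowth_domain (hconn₁ : G₁.Connected)
    (hconn₂ : G₂.Connected) {D₂ : ℕ} (hdeg₂ : ∀ y : V₂, G₂.degree y ≤ D₂) (hlam : 0 < lam)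
    (hlow : ∀ x x' : V₁, lam⁻¹ * (G₁.dist x x' : ℝ) - ε ≤ (G₂.dist (f x) (f x') : ℝ))
    (hdense : ∀ y : V₂, ∃ x : V₁, (G₂.dist y (f x) : ℝ) ≤ C)
    {w : V₂} {x : V₁} (hwx : (G₂.dist w (f x) : ℝ) ≤ C) {r R : ℕ}
    (hrR : lam * (r + 2 * C + ε) ≤ R) :
    graphGrowth G₂ w r ≤ (D₂ + 1) ^ ⌈C⌉₊ * graphGrowth G₁ x R := by
  refine Set.ncard_le_mul_ncard_of_subset_biUnion (hconn₁.finite_setOf_dist_le x R)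
    (fun x' _ => hconn₂.finite_setOf_dist_le (f x') ⌈C⌉₊)
    (fun x' _ => hconn₂.graphGrowth_le_pow hdeg₂ (f x') ⌈C⌉₊) fun y hy => ?_
  obtain ⟨x', hyx'⟩ := hdense y
  rw [Set.mem_ofPred_eq, ← Nat.cast_le (α := ℝ)] at hy
  refine Set.mem_biUnion (x := x') ?_ ?_
  · have htri : (G₂.dist (f x) (f x') : ℝ) ≤ G₂.dist w (f x) + G₂.dist w y + G₂.dist y (f x') := by
      rw [SimpleGraph.dist_comm (u := w) (v := f x)]
      exact_mod_cast hconn₂.dist_triangle.trans (Nat.add_le_add_right hconn₂.dist_triangle _)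
    have hdist := dist_le_mul_dist_map_add hlam hlow x x'
    have : lam * ((G₂.dist (f x) (f x') : ℝ) + ε) ≤ lam * (r + 2 * C + ε) := by
      gcongr
      linarith
    rw [Set.mem_ofPred_eq, ← Nat.cast_le (α := ℝ)]
    linarith
  · rw [Set.mem_ofPred_eq, SimpleGraph.dist_comm, ← Nat.cast_le (α := ℝ)]
    exact hyx'.trans (Nat.le_ceil C)

lemma mul_rpow_le_graphGrowth (hconn₁ : G₁.Connected) (hconn₂ : G₂.Connected) {D₁ : ℕ}
    (hdeg₁ : ∀ x : V₁, G₁.degree x ≤ D₁) (hlam : 0 < lam) (hε : 0 ≤ ε) (hC : 0 ≤ C)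
    (hlow : ∀ x x' : V₁, lam⁻¹ * (G₁.dist x x' : ℝ) - ε ≤ (G₂.dist (f x) (f x') : ℝ))
    (hup : ∀ x x' : V₁, (G₂.dist (f x) (f x') : ℝ) ≤ lam * (G₁.dist x x' : ℝ) + ε)
    {α A : ℝ} (hα : 0 ≤ α) (hA : 0 ≤ A) {r₀ : ℕ} {x : V₁}
    (hgrowth : ∀ s : ℕ, r₀ ≤ s → A * (s : ℝ) ^ α ≤ graphGrowth G₁ x s)
    {N : ℕ} (hN₀ : 0 < N) (hN : lam + ε + C ≤ N) {w : V₂} (hwx : (G₂.dist w (f x) : ℝ) ≤ C)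
    {r : ℕ} (hr : N * (r₀ + 1) ≤ r) :
    A / ((D₁ + 1) ^ ⌈lam * ε⌉₊ * (2 * N) ^ α) * (r : ℝ) ^ α ≤ graphGrowth G₂ w r := by
  set s := r / N
  have hs : r₀ + 1 ≤ s := (Nat.le_div_iff_mul_le hN₀).mpr (by rwa [mul_comm])
  have hs₁ : (1 : ℝ) ≤ s := by exact_mod_cast (Nat.le_add_left 1 r₀).trans hs
  have hsN : (s : ℝ) * N ≤ r := by exact_mod_cast Nat.div_mul_le_self r N
  have hrs : (r : ℝ) ≤ 2 * N * s := by
    have h : (r : ℝ) < s * N + N := by exact_mod_cast Nat.lt_div_mul_add hN₀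
    nlinarith
  have hcmp := graphGrowth_domain_le_mul_graphGrowth_codomain hconn₁ hconn₂ hdeg₁ hlam hlow hup
    hwx (s := s) (r := r) (by nlinarith)
  have hK : (0 : ℝ) < (D₁ + 1) ^ ⌈lam * ε⌉₊ := by positivity
  have h2N : (0 : ℝ) < (2 * N) ^ α := by positivity
  rw [div_mul_eq_mul_div, div_le_iff₀ (mul_pos hK h2N)]
  calc A * (r : ℝ) ^ α ≤ A * (2 * N * s) ^ α := by gcongr
    _ = A * (s : ℝ) ^ α * (2 * N) ^ α := by rw [Real.mul_rpow (by positivity) (by positivity)]; ring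
    _ ≤ graphGrowth G₁ x s * (2 * N) ^ α := by
        gcongr; exact hgrowth s (by omega)
    _ ≤ (D₁ + 1) ^ ⌈lam * ε⌉₊ * graphGrowth G₂ w r * (2 * N) ^ α := by
        gcongr; exact_mod_cast hcmp
    _ = graphGrowth G₂ w r * ((D₁ + 1) ^ ⌈lam * ε⌉₊ * (2 * N) ^ α) := by ring

lemma graphGrowth_le_mul_rpow (hconn₁ : G₁.Connected) (hconn₂ : G₂.Connected) {D₂ : ℕ}
    (hdeg₂ : ∀ y : V₂, G₂.degree y ≤ D₂) (hlam : 0 < lam) (hε : 0 ≤ ε) (hC : 0 ≤ C)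
    (hlow : ∀ x x' : V₁, lam⁻¹ * (G₁.dist x x' : ℝ) - ε ≤ (G₂.dist (f x) (f x') : ℝ))
    (hdense : ∀ y : V₂, ∃ x : V₁, (G₂.dist y (f x) : ℝ) ≤ C)
    {α B : ℝ} {r₀ : ℕ} {x : V₁}
    (hgrowth : ∀ R : ℕ, r₀ ≤ R → (graphGrowth G₁ x R : ℝ) ≤ B * (R : ℝ) ^ α)
    {N : ℕ} (hN₀ : 0 < N) (hN : lam * (1 + 2 * C + ε) ≤ N) {w : V₂}
    (hwx : (G₂.dist w (f x) : ℝ) ≤ C) {r : ℕ} (hr₀ : r₀ ≤ r) (hr : 1 ≤ r) :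
    graphGrowth G₂ w r ≤ (D₂ + 1) ^ ⌈C⌉₊ * B * N ^ α * (r : ℝ) ^ α := by
  have hcmp := graphGrowth_codomain_le_mul_graphGrowth_domain hconn₁ hconn₂ hdeg₂ hlam hlow hdense
    hwx (r := r) (R := N * r) (by
      have hr' : (1 : ℝ) ≤ r := by exact_mod_cast hr
      push_cast
      nlinarith [mul_nonneg hlam.le (by linarith : 0 ≤ 2 * C + ε)])
  calc (graphGrowth G₂ w r : ℝ) ≤ (D₂ + 1) ^ ⌈C⌉₊ * graphGrowth G₁ x (N * r) := by
        exact_mod_cast hcmp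
    _ ≤ (D₂ + 1) ^ ⌈C⌉₊ * (B * ((N * r : ℕ) : ℝ) ^ α) := by
        gcongr
        exact hgrowth _ (hr₀.trans (Nat.le_mul_of_pos_left r hN₀))
    _ = (D₂ + 1) ^ ⌈C⌉₊ * B * N ^ α * (r : ℝ) ^ α := by
        rw [Nat.cast_mul, Real.mul_rpow (by positivity) (by positivity)]; ring

end QuasiIsometry

/-- If `G₁` has uniform polynomial growth of exponent `α` and `G₂` is
quasi-isometric to `G₁` (both connected of globally bounded vertex degree), then
`G₂` also has uniform polynomial growth of the same exponent `α`. -/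
theorem uniform_polynomial_growth_of_quasiIsometry
    {V₁ V₂ : Type*} (G₁ : SimpleGraph V₁) (G₂ : SimpleGraph V₂)
    [G₁.LocallyFinite] [G₂.LocallyFinite]
    (D₁ D₂ : ℕ) (hdeg₁ : ∀ x : V₁, G₁.degree x ≤ D₁) (hdeg₂ : ∀ y : V₂, G₂.degree y ≤ D₂)
    (hconn₁ : G₁.Connected) (hconn₂ : G₂.Connected)
    (α : ℝ) (A B : ℝ) (hA : 0 < A) (hB : 0 < B) (r₀ : ℕ)
    (hgrowth : ∀ (v : V₁) (r : ℕ), r₀ ≤ r →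
      A * (r : ℝ) ^ α ≤ (graphGrowth G₁ v r : ℝ) ∧ (graphGrowth G₁ v r : ℝ) ≤ B * (r : ℝ) ^ α)
    (f : V₁ → V₂) (lam ε C : ℝ) (hlam : 1 ≤ lam) (hε : 0 ≤ ε) (hC : 0 ≤ C)
    (hlow : ∀ x x' : V₁, lam⁻¹ * (G₁.dist x x' : ℝ) - ε ≤ (G₂.dist (f x) (f x') : ℝ))
    (hup : ∀ x x' : V₁, (G₂.dist (f x) (f x') : ℝ) ≤ lam * (G₁.dist x x' : ℝ) + ε)
    (hdense : ∀ y : V₂, ∃ x : V₁, (G₂.dist y (f x) : ℝ) ≤ C) :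
    ∃ (A' B' : ℝ) (_ : 0 < A') (_ : 0 < B') (r₀' : ℕ),
      ∀ (w : V₂) (r : ℕ), r₀' ≤ r →
        A' * (r : ℝ) ^ α ≤ (graphGrowth G₂ w r : ℝ) ∧
        (graphGrowth G₂ w r : ℝ) ≤ B' * (r : ℝ) ^ α := by
  have hlam₀ : 0 < lam := one_pos.trans_le hlam
  set N := ⌈lam * (1 + 2 * C + ε)⌉₊
  have hN : lam * (1 + 2 * C + ε) ≤ N := Nat.le_ceil _
  have hN₀ : 0 < N := Nat.ceil_pos.mpr (by positivity)
  refine ⟨A / ((D₁ + 1) ^ ⌈lam * ε⌉₊ * (2 * N) ^ α), (D₂ + 1) ^ ⌈C⌉₊ * B * N ^ α,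
    by positivity, by positivity, N * (r₀ + 1), fun w r hr => ?_⟩
  obtain ⟨x, hwx⟩ := hdense w
  have hα : 0 ≤ α := nonneg_of_one_le_mul_rpow fun R hR =>
    le_trans (by exact_mod_cast hconn₁.one_le_graphGrowth x R) (hgrowth x R hR).2
  have hr₀ : r₀ + 1 ≤ r := (Nat.le_mul_of_pos_left _ hN₀).trans hr
  exact ⟨mul_rpow_le_graphGrowth hconn₁ hconn₂ hdeg₁ hlam₀ hε hC hlow hup hα hA.le
      (fun s hs => (hgrowth x s hs).1) hN₀ (by nlinarith) hwx hr,
    graphGrowth_le_mul_rpow hconn₁ hconn₂ hdeg₂ hlam₀ hε hC hlow hdense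
      (fun R hR => (hgrowth x R hR).2) hN₀ hN hwx (by omega) (by omega)⟩
end
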